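/- Every bounded linearly convex domain Ω ⊆ ℂ^n is Kobayashi complete (k-finitely compact): for any z ∈ Ω and any sequence (z^k) ⊆ Ω without accumulation point in Ω, k_Ω(z, z^k) → ∞. -/

import Mathlib

/-!
Let `p ∉ Ω` be a limit of a subsequence of `z^k`. Linear convexity gives an affine function `ℓ`
with `ℓ p = 0` and `ℓ ≠ 0` on `Ω`; after scaling, `ℓ` maps the bounded set `Ω` into the punctured
unit disc. For a holomorphic `h : 𝔻 → 𝔻 \ {0}`, `log ‖h‖` is a negative harmonic function, and
Harnack's inequality (Schwarz's lemma for a Cayley transform of a holomorphic function with real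
part `log ‖h‖`) makes `½ log (-log ‖h‖)` 1-Lipschitz for the Poincaré distance. So
`½ log (-log ‖ℓ‖)` is dominated by the Lempert function, hence by the Kobayashi distance, and it
tends to `∞` along the subsequence.
-/

open scoped ENNReal

/-- The Poincaré distance on the unit disc `𝔻 ⊆ ℂ`. -/
noncomputable def poincareDist (a b : ℂ) : ℝ :=
  let ρ := ‖(a - b) / (1 - (starRingEnd ℂ) a * b)‖
  (1 / 2) * Real.log ((1 + ρ) / (1 - ρ))

/-- The Lempert function of `Ω ⊆ E`, defined via analytic discs in `Ω`. -/
noncomputable def lempert (E : Type*) [NormedAddCommGroup E] [NormedSpace ℂ E]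
    (Ω : Set E) (w z : E) : ℝ≥0∞ :=
  ⨅ d : {d : (ℂ → E) × ℂ //
      DifferentiableOn ℂ d.1 (Metric.ball 0 1) ∧
      Set.MapsTo d.1 (Metric.ball 0 1) Ω ∧
      d.1 0 = w ∧ d.2 ∈ Metric.ball (0 : ℂ) 1 ∧ d.1 d.2 = z},
    ENNReal.ofReal (poincareDist 0 d.1.2)

/-- The Kobayashi pseudodistance of `Ω ⊆ E`: the largest pseudodistance
dominated by the Lempert function, obtained by chaining analytic discs. -/
noncomputable def kobayashi (E : Type*) [NormedAddCommGroup E] [NormedSpace ℂ E]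
    (Ω : Set E) (w z : E) : ℝ≥0∞ :=
  ⨅ c : {c : Σ m : ℕ, Fin (m + 1) → E //
      c.2 0 = w ∧ c.2 (Fin.last c.1) = z ∧ ∀ i, c.2 i ∈ Ω},
    ∑ i : Fin c.1.1, lempert E Ω (c.1.2 i.castSucc) (c.1.2 i.succ)

open Filter Metric Set Topology Bornology Complex ComplexConjugate InnerProductSpace

theorem Complex.norm_add_conj_sq (z w : ℂ) :
    ‖z + conj w‖ ^ 2 = ‖z - w‖ ^ 2 + 4 * (z.re * w.re) := by
  rw [Complex.sq_norm, Complex.sq_norm, normSq_apply, normSq_apply]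
  simp only [sub_re, sub_im, add_re, add_im, conj_re, conj_im]
  ring

theorem Complex.norm_sub_lt_norm_add_conj {z w : ℂ} (hz : z.re < 0) (hw : w.re < 0) :
    ‖z - w‖ < ‖z + conj w‖ := by
  refine (pow_lt_pow_iff_left₀ (norm_nonneg _) (norm_nonneg _) two_ne_zero).1 ?_
  rw [norm_add_conj_sq]
  nlinarith [mul_pos_of_neg_of_neg hz hw]

theorem Complex.abs_re_sub_le_of_norm_sub_le {z w : ℂ} {s : ℝ} (hs₀ : 0 ≤ s) (hs₁ : s ≤ 1)
    (h : ‖z - w‖ ≤ s * ‖z + conj w‖) : |z.re - w.re| ≤ s * |z.re + w.re| := by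
  have hsq : ‖z - w‖ ^ 2 ≤ s ^ 2 * ‖z + conj w‖ ^ 2 := by
    rw [← mul_pow]; exact pow_le_pow_left₀ (norm_nonneg _) h 2
  rw [Complex.sq_norm, Complex.sq_norm, normSq_apply, normSq_apply] at hsq
  simp only [sub_re, sub_im, add_re, add_im, conj_re, conj_im] at hsq
  rw [← abs_of_nonneg hs₀, ← abs_mul, ← sq_le_sq]
  nlinarith [mul_nonneg (sub_nonneg.2 (pow_le_one₀ hs₀ hs₁ : s ^ 2 ≤ 1)) (sq_nonneg (z.im - w.im))]

theorem Real.abs_log_sub_log_le {x y s : ℝ} (hx : 0 < x) (hy : 0 < y) (hs : s < 1)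
    (h : |x - y| ≤ s * (x + y)) : |log x - log y| ≤ log ((1 + s) / (1 - s)) := by
  obtain ⟨h₁, h₂⟩ := abs_le.1 h
  have hs₀ : 0 ≤ s := nonneg_of_mul_nonneg_left ((abs_nonneg _).trans h) (by linarith)
  have hT : 0 < (1 + s) / (1 - s) := div_pos (by linarith) (by linarith)
  have hle : ∀ {a b : ℝ}, 0 < a → 0 < b → a - b ≤ s * (a + b) →
      log a ≤ log b + log ((1 + s) / (1 - s)) := fun ha hb hab => by
    rw [← log_mul hb.ne' hT.ne']
    refine log_le_log ha ?_
    rw [mul_div_assoc', le_div_iff₀ (by linarith)]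
    linarith
  rw [abs_le]
  constructor
  · linarith [hle hy hx (by linarith)]
  · linarith [hle hx hy h₂]

theorem poincareDist_zero_left (σ : ℂ) :
    poincareDist 0 σ = (1 / 2) * Real.log ((1 + ‖σ‖) / (1 - ‖σ‖)) := by
  simp [poincareDist]

theorem abs_log_neg_re_sub_le {F : ℂ → ℂ} (hF : DifferentiableOn ℂ F (ball 0 1))
    (hneg : ∀ w ∈ ball (0 : ℂ) 1, (F w).re < 0) {σ : ℂ} (hσ : σ ∈ ball (0 : ℂ) 1) :
    |Real.log (-(F σ).re) - Real.log (-(F 0).re)| ≤ 2 * poincareDist 0 σ := by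
  have h₀ : (0 : ℂ) ∈ ball (0 : ℂ) 1 := mem_ball_self one_pos
  have hσ₁ : ‖σ‖ < 1 := mem_ball_zero_iff.1 hσ
  have hlt : ∀ w ∈ ball (0 : ℂ) 1, ‖F w - F 0‖ < ‖F w + conj (F 0)‖ := fun w hw =>
    norm_sub_lt_norm_add_conj (hneg w hw) (hneg 0 h₀)
  have hden : ∀ w ∈ ball (0 : ℂ) 1, F w + conj (F 0) ≠ 0 := fun w hw =>
    norm_pos_iff.1 ((norm_nonneg _).trans_lt (hlt w hw))
  -- Schwarz's lemma for the Cayley transform of the left half-plane sending `F 0` to `0`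
  have hSchwarz : ‖(F σ - F 0) / (F σ + conj (F 0))‖ ≤ ‖σ‖ := by
    refine norm_le_norm_of_mapsTo_ball (f := fun w => (F w - F 0) / (F w + conj (F 0)))
      ((hF.sub_const _).div (hF.add_const _) hden) (fun w hw => ?_) (by simp) hσ₁
    rw [mem_closedBall_zero_iff, norm_div, div_le_one ((norm_nonneg _).trans_lt (hlt w hw))]
    exact (hlt w hw).le
  rw [norm_div, div_le_iff₀ (norm_pos_iff.2 (hden σ hσ))] at hSchwarz
  have hre := abs_re_sub_le_of_norm_sub_le (norm_nonneg σ) hσ₁.le hSchwarz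
  rw [abs_of_neg (add_neg (hneg σ hσ) (hneg 0 h₀)), ← abs_neg] at hre
  rw [poincareDist_zero_left, ← mul_assoc, mul_one_div_cancel two_ne_zero, one_mul]
  refine Real.abs_log_sub_log_le (neg_pos.2 (hneg σ hσ)) (neg_pos.2 (hneg 0 h₀)) hσ₁ ?_
  convert hre using 1 <;> ring_nf

theorem InnerProductSpace.HarmonicOnNhd.abs_log_neg_sub_le {u : ℂ → ℝ}
    (hu : HarmonicOnNhd u (ball 0 1)) (hneg : ∀ w ∈ ball (0 : ℂ) 1, u w < 0)
    {σ : ℂ} (hσ : σ ∈ ball (0 : ℂ) 1) :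
    |Real.log (-u σ) - Real.log (-u 0)| ≤ 2 * poincareDist 0 σ := by
  obtain ⟨F, hF, hFu⟩ := hu.exists_analyticOnNhd_ball_re_eq
  have hre : ∀ w ∈ ball (0 : ℂ) 1, (F w).re = u w := fun w hw => hFu hw
  rw [← hre σ hσ, ← hre 0 (mem_ball_self one_pos)]
  exact abs_log_neg_re_sub_le hF.differentiableOn (fun w hw => hre w hw ▸ hneg w hw) hσ

-- The Kobayashi distance of `𝔻 \ {0}` between two points of a radius is the difference of the
-- values of this function.
noncomputable def puncturedDiscGauge (w : ℂ) : ℝ :=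
  Real.log (-Real.log ‖w‖) / 2

theorem dist_puncturedDiscGauge_le {h : ℂ → ℂ} (hd : DifferentiableOn ℂ h (ball 0 1))
    (hmaps : MapsTo h (ball 0 1) (ball 0 1 \ {0})) {σ : ℂ} (hσ : σ ∈ ball (0 : ℂ) 1) :
    dist (puncturedDiscGauge (h σ)) (puncturedDiscGauge (h 0)) ≤ poincareDist 0 σ := by
  have hharm : HarmonicOnNhd (fun w => Real.log ‖h w‖) (ball 0 1) := fun w hw =>
    (hd.analyticAt (isOpen_ball.mem_nhds hw)).harmonicAt_log_norm (hmaps hw).2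
  have hneg : ∀ w ∈ ball (0 : ℂ) 1, Real.log ‖h w‖ < 0 := fun w hw =>
    Real.log_neg (norm_pos_iff.2 (hmaps hw).2) (mem_ball_zero_iff.1 (hmaps hw).1)
  have := hharm.abs_log_neg_sub_le hneg hσ
  rw [Real.dist_eq, puncturedDiscGauge, puncturedDiscGauge, ← sub_div, abs_div, abs_two]
  linarith

theorem tendsto_puncturedDiscGauge : Tendsto puncturedDiscGauge (𝓝[≠] 0) atTop :=
  (Real.tendsto_log_atTop.comp (tendsto_neg_atBot_atTop.comp
    (Real.tendsto_log_nhdsGT_zero.comp tendsto_norm_nhdsNE_zero))).atTop_div_const two_pos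

theorem edist_le_sum_edist_fin {α : Type*} [PseudoEMetricSpace α] :
    ∀ {m : ℕ} (c : Fin (m + 1) → α),
      edist (c 0) (c (Fin.last m)) ≤ ∑ i : Fin m, edist (c i.castSucc) (c i.succ)
  | 0, _ => by simp
  | m + 1, c => by
    rw [Fin.sum_univ_castSucc]
    refine (edist_triangle _ (c (Fin.last m).castSucc) _).trans (add_le_add ?_ le_rfl)
    simpa using edist_le_sum_edist_fin (fun i => c i.castSucc)

section

variable {E : Type*} [NormedAddCommGroup E] [NormedSpace ℂ E]

theorem edist_le_kobayashi_of_edist_le_lempert {α : Type*} [PseudoEMetricSpace α] {Ω : Set E}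
    {g : E → α} (hg : ∀ u ∈ Ω, ∀ v ∈ Ω, edist (g u) (g v) ≤ lempert E Ω u v) (u v : E) :
    edist (g u) (g v) ≤ kobayashi E Ω u v := by
  refine le_iInf fun ⟨⟨m, c⟩, hc₀, hcm, hcΩ⟩ => ?_
  dsimp only at hc₀ hcm ⊢
  subst hc₀ hcm
  exact (edist_le_sum_edist_fin (g ∘ c)).trans
    (Finset.sum_le_sum fun i _ => hg _ (hcΩ _) _ (hcΩ _))

theorem edist_puncturedDiscGauge_le_lempert {Ω : Set E} {Φ : E → ℂ}
    (hΦ : DifferentiableOn ℂ Φ Ω) (hΦΩ : MapsTo Φ Ω (ball 0 1 \ {0})) (u v : E) :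
    edist (puncturedDiscGauge (Φ u)) (puncturedDiscGauge (Φ v)) ≤ lempert E Ω u v := by
  refine le_iInf fun ⟨⟨f, σ⟩, hf, hfΩ, hf₀, hσ, hfσ⟩ => ?_
  dsimp only at hf₀ hfσ ⊢
  subst hf₀ hfσ
  rw [edist_dist, dist_comm]
  exact ENNReal.ofReal_le_ofReal
    (dist_puncturedDiscGauge_le (hΦ.comp hf hfΩ) (hΦΩ.comp hfΩ) hσ)

theorem tendsto_kobayashi_top_of_tendsto_zero {Ω : Set E} {Φ : E → ℂ}
    (hΦ : DifferentiableOn ℂ Φ Ω) (hΦΩ : MapsTo Φ Ω (ball 0 1 \ {0})) (z : E) {x : ℕ → E}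
    (hx : ∀ k, x k ∈ Ω) (hΦx : Tendsto (Φ ∘ x) atTop (𝓝 0)) :
    Tendsto (fun k => kobayashi E Ω z (x k)) atTop (𝓝 ⊤) := by
  have hgauge : Tendsto (fun k => puncturedDiscGauge (Φ (x k))) atTop atTop :=
    tendsto_puncturedDiscGauge.comp <| tendsto_nhdsWithin_iff.2
      ⟨hΦx, Eventually.of_forall fun k => (hΦΩ (hx k)).2⟩
  refine tendsto_nhds_top_mono (ENNReal.tendsto_ofReal_atTop.comp
    (tendsto_atTop_add_const_right _ (-puncturedDiscGauge (Φ z)) hgauge)) ?_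
  refine Eventually.of_forall fun k => ?_
  refine le_trans ?_ (edist_le_kobayashi_of_edist_le_lempert
    (fun u _ v _ => edist_puncturedDiscGauge_le_lempert hΦ hΦΩ u v) z (x k))
  rw [edist_dist, Real.dist_eq, abs_sub_comm]
  exact ENNReal.ofReal_le_ofReal ((le_of_eq (by ring)).trans (le_abs_self _))

theorem tendsto_kobayashi_top_of_forall_notMem [ProperSpace E] {Ω : Set E} (hΩ : IsBounded Ω)
    (hsep : ∀ p ∉ Ω, ∃ ℓ : E → ℂ, Differentiable ℂ ℓ ∧ ℓ p = 0 ∧ ∀ v ∈ Ω, ℓ v ≠ 0)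
    (z : E) {x : ℕ → E} (hx : ∀ k, x k ∈ Ω) (hcl : ¬ ∃ p ∈ Ω, MapClusterPt p atTop x) :
    Tendsto (fun k => kobayashi E Ω z (x k)) atTop (𝓝 ⊤) := by
  refine tendsto_of_subseq_tendsto fun ns hns => ?_
  obtain ⟨p, -, ms, hms, hp⟩ :=
    hΩ.isCompact_closure.tendsto_subseq fun k => subset_closure (hx (ns k))
  have hpΩ : p ∉ Ω := fun hpΩ =>
    hcl ⟨p, hpΩ, hp.mapClusterPt.of_comp (hns.comp hms.tendsto_atTop)⟩
  obtain ⟨ℓ, hℓ, hℓp, hℓΩ⟩ := hsep p hpΩ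
  obtain ⟨R, hR⟩ := hΩ.isCompact_closure.exists_bound_of_continuousOn hℓ.continuous.continuousOn
  have hRΩ : ∀ v ∈ Ω, ‖ℓ v‖ < R + 1 := fun v hv => (hR v (subset_closure hv)).trans_lt (lt_add_one R)
  have hR₀ : 0 < R + 1 := (norm_nonneg _).trans_lt (hRΩ _ (hx 0))
  refine ⟨ms, tendsto_kobayashi_top_of_tendsto_zero (Φ := fun v => ℓ v / ((R + 1 : ℝ) : ℂ))
    (by fun_prop) (fun v hv => ⟨?_, ?_⟩) z (fun k => hx _) ?_⟩
  · rw [mem_ball_zero_iff, norm_div, Complex.norm_real, Real.norm_eq_abs, abs_of_pos hR₀,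
      div_lt_one hR₀]
    exact hRΩ v hv
  · exact div_ne_zero (hℓΩ v hv) (Complex.ofReal_ne_zero.2 hR₀.ne')
  · simpa [hℓp, Function.comp_def] using
      ((hℓ.continuous.tendsto p).comp hp).div_const ((R + 1 : ℝ) : ℂ)

end

theorem bounded_linearly_convex_kobayashi_complete_general (n : ℕ)
    (Ω : Set (Fin n → ℂ))
    (hbdd : Bornology.IsBounded Ω)
    (hlc : ∀ w : Fin n → ℂ, w ∉ Ω →
      ∃ a : Fin n → ℂ, a ≠ 0 ∧ ∃ b : ℂ,
        (∑ i, a i * w i) = b ∧ ∀ v ∈ Ω, (∑ i, a i * v i) ≠ b) :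
    ∀ z ∈ Ω, ∀ zk : ℕ → (Fin n → ℂ), (∀ k, zk k ∈ Ω) →
      (¬ ∃ x ∈ Ω, MapClusterPt x Filter.atTop zk) →
      Filter.Tendsto (fun k => kobayashi (Fin n → ℂ) Ω z (zk k))
        Filter.atTop (nhds ⊤) := by
  intro z _ zk hzk hcl
  refine tendsto_kobayashi_top_of_forall_notMem hbdd (fun p hp => ?_) z hzk hcl
  obtain ⟨a, -, b, hab, hΩ⟩ := hlc p hp
  exact ⟨fun v => ∑ i, a i * v i - b, by fun_prop, sub_eq_zero.2 hab,
    fun v hv => sub_ne_zero.2 (hΩ v hv)⟩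

/-- Every bounded linearly convex domain `Ω ⊆ ℂ^n` is Kobayashi complete
(`k`-finitely compact): `k_Ω(z, z^k) → ∞` for every sequence in `Ω` without
accumulation point in `Ω`. -/
theorem bounded_linearly_convex_kobayashi_complete (n : ℕ)
    (Ω : Set (Fin n → ℂ)) (hopen : IsOpen Ω) (hconn : IsConnected Ω)
    (hbdd : Bornology.IsBounded Ω)
    (hlc : ∀ w : Fin n → ℂ, w ∉ Ω →
      ∃ a : Fin n → ℂ, a ≠ 0 ∧ ∃ b : ℂ,
        (∑ i, a i * w i) = b ∧ ∀ v ∈ Ω, (∑ i, a i * v i) ≠ b) :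
    ∀ z ∈ Ω, ∀ zk : ℕ → (Fin n → ℂ), (∀ k, zk k ∈ Ω) →
      (¬ ∃ x ∈ Ω, MapClusterPt x Filter.atTop zk) →
      Filter.Tendsto (fun k => kobayashi (Fin n → ℂ) Ω z (zk k))
        Filter.atTop (nhds ⊤) :=
  bounded_linearly_convex_kobayashi_complete_general n Ω hbdd hlc
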